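/- For every non-negative integer n, the lattices generated by A_n and V_n coincide: {A_n k : k ∈ ℤ^{2^n}} = {V_n k : k ∈ ℤ^{2^n}}. Hence A_n generates (a coordinate permutation of) the 2^n-dimensional Chebyshev-Frolov lattice. -/

import Mathlib

/-- σ(n,k) from the paper: σ(0,1)=1 and, with d = 2^n, σ(n+1,k)=σ(n,k) for 1 ≤ k ≤ d,
σ(n+1,k)=2d+1−σ(n,k−d) for d+1 ≤ k ≤ 2d. -/
def sigmaCF : ℕ → ℕ → ℤ
  | 0, _ => 1
  | n + 1, k => if k ≤ 2 ^ n then sigmaCF n k else 2 * 2 ^ n + 1 - sigmaCF n (k - 2 ^ n)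

/-- ξ_{n,k} = 2 cos(π(2σ(n,k) − 1)/2^{n+1}). -/
noncomputable def xiCF (n k : ℕ) : ℝ :=
  2 * Real.cos (Real.pi * (2 * (sigmaCF n k : ℝ) - 1) / 2 ^ (n + 1))

/-- D_n = diag(ξ_{n+1,1}, …, ξ_{n+1,2^n}). -/
noncomputable def DCF (n : ℕ) : Matrix (Fin (2 ^ n)) (Fin (2 ^ n)) ℝ :=
  Matrix.diagonal fun i => xiCF (n + 1) (i.val + 1)

/-- A_0 = (1), A_{n+1} = [[A_n, D_n A_n], [A_n, −D_n A_n]]. -/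
noncomputable def ACF : (n : ℕ) → Matrix (Fin (2 ^ n)) (Fin (2 ^ n)) ℝ
  | 0 => 1
  | n + 1 =>
    Matrix.reindex (finSumFinEquiv.trans (finCongr (by rw [pow_succ, mul_two])))
      (finSumFinEquiv.trans (finCongr (by rw [pow_succ, mul_two])))
      (Matrix.fromBlocks (ACF n) (DCF n * ACF n) (ACF n) (-(DCF n * ACF n)))

/-- V_n: Vandermonde matrix with (i,j)-entry ξ_{n,i}^{j−1}. -/
noncomputable def VCF (n : ℕ) : Matrix (Fin (2 ^ n)) (Fin (2 ^ n)) ℝ :=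
  Matrix.of fun i j => xiCF n (i.val + 1) ^ (j.val)

/-!
Write `L(M)` for the ℤ-span of the columns of `M`. Since `ξ_{n+1,k}² = ξ_{n,k} + 2` (half-angle
formula) and `ξ_{n+1,2^n+k} = -ξ_{n+1,k}`, splitting the columns of `V_{n+1}` into even and odd
powers shows that, up to permuting rows and columns, `V_{n+1} = [[W, D_n W], [W, -D_n W]]`, where
`W` is the Vandermonde matrix of the shifted nodes `ξ_{n,k} + 2`. The lattice of such a block matrix
depends only on `L(W)`, and `L(W) = L(V_n)` because an integer shift of the nodes changes the
monomial columns by a unimodular binomial matrix. So `L(A_n)` and `L(V_n)` obey the same recursion.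
-/

open Matrix Submodule Set

namespace Matrix

variable {R : Type*} [CommRing R] {l m n o : Type*}

def colLattice (M : Matrix m n R) : Submodule ℤ (m → R) := span ℤ (range fun j i => M i j)

theorem range_mulVec_intCast [Fintype n] (M : Matrix m n R) :
    range (fun k : n → ℤ => M *ᵥ fun j => (k j : R)) = colLattice M := by
  ext v
  rw [colLattice, SetLike.mem_coe, mem_span_range_iff_exists_fun]
  refine exists_congr fun k => ?_
  suffices M *ᵥ (fun j => (k j : R)) = ∑ j, k j • fun i => M i j by simp only [this]
  ext i
  simp [mulVec, dotProduct, mul_comm]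

theorem colLattice_mul [Fintype m] (B : Matrix l m R) (M : Matrix m n R) :
    colLattice (B * M) = (colLattice M).map (B.mulVecLin.restrictScalars ℤ) := by
  rw [colLattice, colLattice, map_span, ← range_comp]
  rfl

theorem colLattice_fromCols (P : Matrix m n R) (Q : Matrix m o R) :
    colLattice (fromCols P Q) = colLattice P ⊔ colLattice Q := by
  rw [colLattice, colLattice, colLattice, ← span_union, ← Sum.elim_range]
  congr 2
  ext (j | j) <;> rfl

theorem colLattice_submatrix (M : Matrix m n R) (r : l → m) {c : o → n}
    (hc : Function.Surjective c) :
    colLattice (M.submatrix r c) = (colLattice M).map (LinearMap.funLeft ℤ R r) := by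
  rw [colLattice, colLattice, map_span, ← range_comp, ← hc.range_comp]
  rfl

theorem colLattice_fromBlocks_mul [Fintype m] [DecidableEq m] (D : Matrix m m R)
    (M : Matrix m n R) :
    colLattice (fromBlocks M (D * M) M (-(D * M))) =
      (colLattice M).map ((fromRows 1 1 : Matrix (m ⊕ m) m R).mulVecLin.restrictScalars ℤ) ⊔
        (colLattice M).map ((fromRows D (-D)).mulVecLin.restrictScalars ℤ) := by
  rw [← fromCols_fromRows_eq_fromBlocks, colLattice_fromCols, ← colLattice_mul, ← colLattice_mul,
    fromRows_mul, fromRows_mul, Matrix.one_mul, Matrix.neg_mul]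

theorem colLattice_vandermonde_add_intCast_le {d : ℕ} (v : Fin d → R) (t : ℤ) :
    colLattice (vandermonde fun i => v i + t) ≤ colLattice (vandermonde v) := by
  rw [colLattice, span_le]
  rintro _ ⟨a, rfl⟩
  have hexpand : (fun i => (v i + t) ^ (a : ℕ)) =
      ∑ b ∈ Finset.range (a + 1), ((a : ℕ).choose b * t ^ ((a : ℕ) - b) : ℤ) • fun i => v i ^ b := by
    ext i
    simp only [Finset.sum_apply, Pi.smul_apply]
    simp only [add_pow, zsmul_eq_mul, Int.cast_mul, Int.cast_pow, Int.cast_natCast]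
    exact Finset.sum_congr rfl fun b _ => by ring
  change (fun i => (v i + t) ^ (a : ℕ)) ∈ _
  rw [hexpand]
  refine sum_mem fun b hb => smul_mem _ _ (subset_span ⟨⟨b, ?_⟩, rfl⟩)
  have := Finset.mem_range.mp hb
  omega

theorem colLattice_vandermonde_add_intCast {d : ℕ} (v : Fin d → R) (t : ℤ) :
    colLattice (vandermonde fun i => v i + t) = colLattice (vandermonde v) := by
  refine (colLattice_vandermonde_add_intCast_le v t).antisymm ?_
  simpa using colLattice_vandermonde_add_intCast_le (fun i => v i + t) (-t)

end Matrix

theorem xiCF_succ_sq {n k : ℕ} (hk : k ≤ 2 ^ n) : xiCF (n + 1) k ^ 2 = xiCF n k + 2 := by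
  have hσ : sigmaCF (n + 1) k = sigmaCF n k := if_pos hk
  rw [xiCF, xiCF, hσ, mul_pow, Real.cos_sq, pow_succ 2 (n + 1)]
  ring_nf

theorem xiCF_succ_two_pow_add {n k : ℕ} (hk₁ : 1 ≤ k) (hk : k ≤ 2 ^ n) :
    xiCF (n + 1) (2 ^ n + k) = -xiCF (n + 1) k := by
  have hσ : sigmaCF (n + 1) (2 ^ n + k) = 2 * 2 ^ n + 1 - sigmaCF n k := by
    rw [sigmaCF, if_neg (by omega), Nat.add_sub_cancel_left]
  have hσ' : sigmaCF (n + 1) k = sigmaCF n k := if_pos hk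
  rw [xiCF, xiCF, hσ, hσ', ← mul_neg, ← Real.cos_pi_sub]
  congr 2
  push_cast
  field_simp
  ring

def finSumTwoPowEquiv (n : ℕ) : Fin (2 ^ n) ⊕ Fin (2 ^ n) ≃ Fin (2 ^ (n + 1)) :=
  finSumFinEquiv.trans (finCongr (by rw [pow_succ, mul_two]))

def finSumTwoPowInterleave (n : ℕ) : Fin (2 ^ n) ⊕ Fin (2 ^ n) → Fin (2 ^ (n + 1)) :=
  Sum.elim (fun a => ⟨2 * a, by omega⟩) (fun a => ⟨2 * a + 1, by omega⟩)

theorem finSumTwoPowInterleave_surjective (n : ℕ) :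
    Function.Surjective (finSumTwoPowInterleave n) := by
  intro j
  obtain ⟨a, ha | ha⟩ := Nat.even_or_odd' j
  · exact ⟨Sum.inl ⟨a, by omega⟩, Fin.ext ha.symm⟩
  · exact ⟨Sum.inr ⟨a, by omega⟩, Fin.ext ha.symm⟩

theorem ACF_succ_submatrix (n : ℕ) :
    (ACF (n + 1)).submatrix (finSumTwoPowEquiv n) (finSumTwoPowEquiv n) =
      fromBlocks (ACF n) (DCF n * ACF n) (ACF n) (-(DCF n * ACF n)) := by
  change (reindex (finSumTwoPowEquiv n) (finSumTwoPowEquiv n) _).submatrix _ _ = _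
  rw [reindex_apply, submatrix_submatrix, Equiv.symm_comp_self, submatrix_id_id]

theorem VCF_succ_submatrix (n : ℕ) :
    let W := vandermonde fun i : Fin (2 ^ n) => xiCF n (i + 1) + 2
    (VCF (n + 1)).submatrix (finSumTwoPowEquiv n) (finSumTwoPowInterleave n) =
      fromBlocks W (DCF n * W) W (-(DCF n * W)) := by
  ext (i | i) (a | a) <;>
    simp only [VCF, DCF, finSumTwoPowEquiv, finSumTwoPowInterleave, Equiv.coe_trans,
      submatrix_apply, Function.comp_apply, finSumFinEquiv_apply_left, finSumFinEquiv_apply_right,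
      Fin.natAdd_eq_addNat, finCongr_apply, Sum.elim_inl, Sum.elim_inr, of_apply, Fin.val_cast,
      Fin.val_castAdd, Fin.val_addNat, fromBlocks_apply₁₁, fromBlocks_apply₁₂, fromBlocks_apply₂₁,
      fromBlocks_apply₂₂, Matrix.neg_apply, diagonal_mul, vandermonde_apply] <;>
    have hk : (i : ℕ) + 1 ≤ 2 ^ n := i.isLt
  · rw [pow_mul, xiCF_succ_sq hk]
  · rw [pow_succ, pow_mul, xiCF_succ_sq hk, mul_comm]
  all_goals rw [show (i : ℕ) + 2 ^ n + 1 = 2 ^ n + (i + 1) by omega,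
    xiCF_succ_two_pow_add (by omega) hk]
  · rw [pow_mul, neg_sq, xiCF_succ_sq hk]
  · rw [pow_succ, pow_mul, neg_sq, xiCF_succ_sq hk, mul_neg, mul_comm]

theorem colLattice_ACF_eq_colLattice_VCF (n : ℕ) : colLattice (ACF n) = colLattice (VCF n) := by
  induction n with
  | zero =>
    congr 1
    ext i j
    obtain rfl := Subsingleton.elim (α := Fin 1) i j
    simp [ACF, VCF]
  | succ n ih =>
    have hW : colLattice (vandermonde fun i : Fin (2 ^ n) => xiCF n (i + 1) + 2) =
        colLattice (VCF n) := by
      exact_mod_cast colLattice_vandermonde_add_intCast (fun i : Fin (2 ^ n) => xiCF n (i + 1)) 2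
    apply map_injective_of_injective
      (LinearMap.funLeft_injective_of_surjective ℤ ℝ _ (finSumTwoPowEquiv n).surjective)
    rw [← colLattice_submatrix _ _ (finSumTwoPowEquiv n).surjective,
      ← colLattice_submatrix _ _ (finSumTwoPowInterleave_surjective n), ACF_succ_submatrix,
      VCF_succ_submatrix, colLattice_fromBlocks_mul, colLattice_fromBlocks_mul, ih, hW]

/-- For every non-negative integer `n`, the lattices generated by `A_n` and `V_n` coincide:
`{A_n k : k ∈ ℤ^{2^n}} = {V_n k : k ∈ ℤ^{2^n}}`; hence `A_n` generates (a coordinate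
permutation of) the `2^n`-dimensional Chebyshev-Frolov lattice. -/
theorem ACF_lattice_eq_VCF_lattice (n : ℕ) :
    Set.range (fun k : Fin (2 ^ n) → ℤ => (ACF n).mulVec (fun j => (k j : ℝ))) =
      Set.range (fun k : Fin (2 ^ n) → ℤ => (VCF n).mulVec (fun j => (k j : ℝ))) := by
  rw [range_mulVec_intCast, range_mulVec_intCast, colLattice_ACF_eq_colLattice_VCF]
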